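/- arXiv:2006.12294 — 3 statements merged into one kernel-verified Lean document; each statement's English description precedes it below -/
import Mathlib

section
/- Let X be an n×d real matrix, L a symmetric positive semidefinite n×n matrix, α > 0, and W a fixed d×k matrix. The function Z ↦ ‖X − Z Wᵀ‖_F² + α·Tr(Zᵀ L Z) over n×k matrices Z, subject to Wᵀ W = I_k, attains its unique minimum at Z* = (I + αL)⁻¹ X W. -/
open Matrix
open scoped ComplexOrder

/-!
With `M = 1 + α • L`, which is positive definite, the constraint `Wᵀ * W = 1` turns the objective
into `Tr (Xᵀ X) + Tr (Zᵀ M Z) - 2 Tr (Zᵀ X W)`. Completing the square around `Z*`, the solution of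
`M Z* = X W`, gives `f Z = f Z* + Tr ((Z - Z*)ᵀ M (Z - Z*))`, and this last trace is positive
whenever `Z ≠ Z*`.
-/

namespace Matrix

variable {m n p : Type*} [Fintype m] [Fintype n] [Fintype p]

theorem PosDef.trace_conjTranspose_mul_mul_pos {𝕜 : Type*} [RCLike 𝕜] {M : Matrix m m 𝕜}
    (hM : M.PosDef) {D : Matrix m p 𝕜} (hD : D ≠ 0) : 0 < trace (Dᴴ * M * D) := by
  have hpsd := hM.posSemidef.conjTranspose_mul_mul_same D
  refine hpsd.trace_nonneg.lt_of_ne fun h => hD ?_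
  have hzero : Dᴴ * M * D = 0 := hpsd.trace_eq_zero_iff.mp h.symm
  refine ext_iff_mulVec.mpr fun v => ?_
  by_contra hv
  have hquad : star (D *ᵥ v) ⬝ᵥ M *ᵥ (D *ᵥ v) = star v ⬝ᵥ (Dᴴ * M * D) *ᵥ v := by
    simp only [star_mulVec, ← mulVec_mulVec, dotProduct_mulVec, vecMul_vecMul]
  have hpos := hM.dotProduct_mulVec_pos (by simpa using hv)
  rw [hquad, hzero, zero_mulVec, dotProduct_zero] at hpos
  exact hpos.false

variable {R : Type*} [CommRing R]

theorem trace_transpose_mul_sub_mul_transpose [DecidableEq p] (X : Matrix m n R)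
    (Z : Matrix m p R) {W : Matrix n p R} (hW : Wᵀ * W = 1) :
    trace ((X - Z * Wᵀ)ᵀ * (X - Z * Wᵀ))
      = trace (Xᵀ * X) - 2 * trace (Zᵀ * (X * W)) + trace (Zᵀ * Z) := by
  have hcross : trace (Xᵀ * (Z * Wᵀ)) = trace (Zᵀ * (X * W)) := by
    rw [← trace_transpose]
    simp only [transpose_mul, transpose_transpose, Matrix.mul_assoc]
    rw [trace_mul_comm]
    simp only [Matrix.mul_assoc]
  have hsq : trace ((Z * Wᵀ)ᵀ * (Z * Wᵀ)) = trace (Zᵀ * Z) := by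
    rw [transpose_mul, transpose_transpose, Matrix.mul_assoc, trace_mul_comm,
      Matrix.mul_assoc, Matrix.mul_assoc Z, hW, Matrix.mul_one]
  rw [transpose_sub, Matrix.sub_mul, Matrix.mul_sub, Matrix.mul_sub, trace_sub, trace_sub,
    trace_sub, ← trace_transpose ((Z * Wᵀ)ᵀ * X), transpose_mul, transpose_transpose, hcross, hsq]
  ring

theorem trace_transpose_mul_mul_sub_eq_add_trace_sub {M : Matrix m m R} (hM : Mᵀ = M)
    {Z₀ B : Matrix m p R} (hZ₀ : M * Z₀ = B) (Z : Matrix m p R) :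
    trace (Zᵀ * M * Z) - 2 * trace (Zᵀ * B)
      = trace (Z₀ᵀ * M * Z₀) - 2 * trace (Z₀ᵀ * B) + trace ((Z - Z₀)ᵀ * M * (Z - Z₀)) := by
  have hsymm : trace (Z₀ᵀ * M * Z) = trace (Zᵀ * B) := by
    rw [← trace_transpose, transpose_mul, transpose_mul, transpose_transpose, hM, hZ₀]
  rw [transpose_sub, Matrix.sub_mul, Matrix.sub_mul, Matrix.mul_sub, Matrix.mul_sub, trace_sub,
    trace_sub, trace_sub, hsymm, Matrix.mul_assoc Zᵀ M Z₀, Matrix.mul_assoc Z₀ᵀ M Z₀, hZ₀]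
  ring

end Matrix

/-- For fixed orthonormal `W`, the GPCA objective
`‖X − Z Wᵀ‖_F² + α·Tr(Zᵀ L Z)` (with the squared Frobenius norm written as
`Tr((X − Z Wᵀ)ᵀ (X − Z Wᵀ))`) attains its unique minimum at
`Z* = (I + αL)⁻¹ X W`. -/
theorem stmt1 {n d k : ℕ} (X : Matrix (Fin n) (Fin d) ℝ)
    (L : Matrix (Fin n) (Fin n) ℝ) (α : ℝ) (W : Matrix (Fin d) (Fin k) ℝ)
    (hL : L.PosSemidef) (hα : 0 < α) (hW : Wᵀ * W = 1)
    (f : Matrix (Fin n) (Fin k) ℝ → ℝ)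
    (hf : ∀ Z, f Z = Matrix.trace ((X - Z * Wᵀ)ᵀ * (X - Z * Wᵀ))
        + α * Matrix.trace (Zᵀ * L * Z))
    (Zstar : Matrix (Fin n) (Fin k) ℝ)
    (hZstar : Zstar = (1 + α • L)⁻¹ * X * W) :
    ∀ Z : Matrix (Fin n) (Fin k) ℝ, Z ≠ Zstar → f Zstar < f Z := by
  intro Z hZ
  set M := 1 + α • L
  have hM : M.PosDef := PosDef.one.add_posSemidef (hL.smul hα.le)
  have hMsymm : Mᵀ = M := by simpa using hM.isHermitian.eq
  have hMZstar : M * Zstar = X * W := by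
    rw [hZstar, ← Matrix.mul_assoc, ← Matrix.mul_assoc, mul_nonsing_inv _ hM.det_pos.ne'.isUnit,
      Matrix.one_mul]
  have hf' : ∀ Z, f Z = trace (Xᵀ * X) + (trace (Zᵀ * M * Z) - 2 * trace (Zᵀ * (X * W))) := by
    intro Z
    rw [hf, trace_transpose_mul_sub_mul_transpose X Z hW]
    simp only [M, Matrix.mul_add, Matrix.add_mul, Matrix.mul_one, Matrix.mul_smul,
      Matrix.smul_mul, trace_add, trace_smul, smul_eq_mul]
    ring
  have hpos := PosDef.trace_conjTranspose_mul_mul_pos hM (sub_ne_zero.mpr hZ)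
  rw [conjTranspose_eq_transpose_of_trivial] at hpos
  rw [hf', hf', trace_transpose_mul_mul_sub_eq_add_trace_sub hMsymm hMZstar Z]
  linarith
end

section
/- Let X be an n×d real matrix, L a symmetric positive semidefinite n×n matrix, α > 0, and set M = (I + αL)⁻¹. For any d×k matrix W with WᵀW = I_k, the quantity ‖X − M X W Wᵀ‖_F² + α·Tr(Wᵀ Xᵀ M L M X W) equals Tr(Xᵀ X) − Tr(Wᵀ Xᵀ M X W). -/
/-!
With `M = (1 + αL)⁻¹` symmetric, expanding the Frobenius norm using `WᵀW = 1` gives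
`Tr(XᵀX) - 2 Tr(WᵀXᵀMXW) + Tr(WᵀXᵀM²XW)`. The regulariser then combines with the last term
through the resolvent identity `M² + α MLM = M(1 + αL)M = M`.
-/

open Matrix

namespace Matrix

variable {m n p R : Type*} [Fintype m] [Fintype n] [Fintype p] [CommRing R]

theorem trace_transpose_mul_self_sub_mul_transpose [DecidableEq p] (X : Matrix m n R) (Y : Matrix m p R)
    {W : Matrix n p R} (hW : Wᵀ * W = 1) :
    trace ((X - Y * Wᵀ)ᵀ * (X - Y * Wᵀ))
      = trace (Xᵀ * X) - 2 * trace (Wᵀ * Xᵀ * Y) + trace (Yᵀ * Y) := by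
  have hcross : trace (Xᵀ * (Y * Wᵀ)) = trace (Wᵀ * Xᵀ * Y) := by
    rw [← Matrix.mul_assoc, trace_mul_cycle]
  have hcross' : trace ((Y * Wᵀ)ᵀ * X) = trace (Wᵀ * Xᵀ * Y) := by
    rw [← trace_transpose, transpose_mul, transpose_transpose, hcross]
  have hsquare : trace ((Y * Wᵀ)ᵀ * (Y * Wᵀ)) = trace (Yᵀ * Y) := by
    rw [transpose_mul, transpose_transpose, Matrix.mul_assoc, trace_mul_comm]
    simp only [Matrix.mul_assoc, hW, Matrix.mul_one]
  rw [transpose_sub, Matrix.sub_mul, Matrix.mul_sub, Matrix.mul_sub, trace_sub, trace_sub,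
    trace_sub, hcross, hcross', hsquare]
  ring

theorem mul_self_add_smul_mul_mul_eq_self [DecidableEq n] {M L : Matrix n n R} (α : R)
    (hM : M * (1 + α • L) = 1) : M * M + α • (M * L * M) = M := by
  calc M * M + α • (M * L * M) = M * (1 + α • L) * M := by
        rw [Matrix.mul_add, Matrix.mul_one, Matrix.add_mul, Matrix.mul_smul, Matrix.smul_mul]
    _ = M := by rw [hM, Matrix.one_mul]

end Matrix

/-- Trace simplification of the GPCA objective after substituting the optimal
`Z* = M X W`, where `M = (I + αL)⁻¹`. -/
theorem stmt2 {n d k : ℕ} (X : Matrix (Fin n) (Fin d) ℝ)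
    (L : Matrix (Fin n) (Fin n) ℝ) (α : ℝ)
    (hL : L.PosSemidef) (hα : 0 < α)
    (M : Matrix (Fin n) (Fin n) ℝ) (hM : M = (1 + α • L)⁻¹)
    (W : Matrix (Fin d) (Fin k) ℝ) (hW : Wᵀ * W = 1) :
    Matrix.trace ((X - M * X * W * Wᵀ)ᵀ * (X - M * X * W * Wᵀ))
        + α * Matrix.trace (Wᵀ * Xᵀ * M * L * M * X * W)
      = Matrix.trace (Xᵀ * X) - Matrix.trace (Wᵀ * Xᵀ * M * X * W) := by
  have hA : (1 + α • L).PosDef := PosDef.one.add_posSemidef (hL.smul hα.le)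
  have hMA : M * (1 + α • L) = 1 :=
    hM ▸ nonsing_inv_mul _ ((isUnit_iff_isUnit_det _).mp hA.isUnit)
  have hMsymm : Mᵀ = M := by
    rw [hM, transpose_nonsing_inv, ← conjTranspose_eq_transpose_of_trivial, hA.isHermitian.eq]
  have hquad : trace ((M * X * W)ᵀ * (M * X * W)) + α * trace (Wᵀ * Xᵀ * M * L * M * X * W)
      = trace (Wᵀ * Xᵀ * M * X * W) := by
    rw [← smul_eq_mul, ← trace_smul, ← trace_add]
    congr 1
    calc (M * X * W)ᵀ * (M * X * W) + α • (Wᵀ * Xᵀ * M * L * M * X * W)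
        = Wᵀ * Xᵀ * (M * M + α • (M * L * M)) * X * W := by
          simp only [transpose_mul, hMsymm, Matrix.mul_add, Matrix.add_mul, Matrix.mul_smul,
            Matrix.smul_mul, Matrix.mul_assoc]
      _ = Wᵀ * Xᵀ * M * X * W := by rw [mul_self_add_smul_mul_mul_eq_self α hMA]
  have hcross : trace (Wᵀ * Xᵀ * (M * X * W)) = trace (Wᵀ * Xᵀ * M * X * W) := by
    simp only [Matrix.mul_assoc]
  rw [trace_transpose_mul_self_sub_mul_transpose X (M * X * W) hW, hcross]
  linarith
end

section
/- (Supervised GPCA closed form.) Let X be an n×d matrix, L_spr a symmetric positive semidefinite n×n matrix, and α > 0. The minimum of ‖X − ZWᵀ‖_F² + α·Tr(Zᵀ L_spr Z) over n×k matrices Z and d×k matrices W with WᵀW = I_k is attained at W* = (w₁,...,w_k), the top-k orthonormal eigenvectors of Xᵀ(I + αL_spr)⁻¹X, and Z* = (I + αL_spr)⁻¹ X W*; the minimum value equals Tr(XᵀX) minus the sum of the k largest eigenvalues of Xᵀ(I + αL_spr)⁻¹X. -/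
open Matrix Finset

/-!
Writing `A = 1 + α L`, which is positive definite, and completing the square in `Z` turns the
objective, for `Wᵀ W = 1`, into
`Tr(XᵀX) - Tr(Wᵀ S W) + Tr((Z - A⁻¹XW)ᵀ A (Z - A⁻¹XW))` with `S = Xᵀ A⁻¹ X`.
The last term is nonnegative and vanishes at `Z = A⁻¹XW`. In an orthonormal eigenbasis `U` of
`S`, `Tr(Wᵀ S W) = ∑ λᵢ cᵢ` where `cᵢ = ‖Wᵀuᵢ‖²` lies in `[0, 1]` (as `WWᵀ` is an orthogonal
projection) and `∑ cᵢ = k`; such a weighted sum is at most the sum of the `k` largest `λᵢ`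
(Ky Fan), with equality for the top `k` eigenvectors.
-/

theorem sum_mul_le_sum_of_separated {ι : Type*} [Fintype ι] [DecidableEq ι] {s : Finset ι}
    {lam c : ι → ℝ} (hsep : ∀ i ∈ s, ∀ j ∉ s, lam j ≤ lam i) (hc0 : ∀ i, 0 ≤ c i)
    (hc1 : ∀ i, c i ≤ 1) (hsum : ∑ i, c i = #s) :
    ∑ i, lam i * c i ≤ ∑ i ∈ s, lam i := by
  -- With `t` between the values on `s` and off `s`, every term `(lam i - t) * (c i - 1ₛ i)` is
  -- nonpositive, and these terms sum to the difference of the two sides.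
  obtain ⟨t, hts, htc⟩ : ∃ t, (∀ i ∈ s, t ≤ lam i) ∧ ∀ j ∉ s, lam j ≤ t := by
    rcases s.eq_empty_or_nonempty with rfl | hs
    · obtain ⟨t, ht⟩ := (Set.finite_range lam).bddAbove
      exact ⟨t, by simp, fun j _ => ht ⟨j, rfl⟩⟩
    · exact ⟨s.inf' hs lam, fun i hi => inf'_le lam hi,
        fun j hj => le_inf' hs lam fun i hi => hsep i hi j hj⟩
  set ind : ι → ℝ := fun i => if i ∈ s then 1 else 0
  have hind_sum : ∑ i, ind i = #s := by simp [ind]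
  have hlam_ind : ∑ i, lam i * ind i = ∑ i ∈ s, lam i := by simp [ind, mul_ite]
  have hterm : ∀ i, (lam i - t) * (c i - ind i) ≤ 0 := by
    intro i
    by_cases hi : i ∈ s
    · exact mul_nonpos_of_nonneg_of_nonpos (by linarith [hts i hi]) (by simp [ind, hi, hc1 i])
    · exact mul_nonpos_of_nonpos_of_nonneg (by linarith [htc i hi]) (by simp [ind, hi, hc0 i])
  have hsplit : ∑ i, lam i * c i - ∑ i, lam i * ind i
      = ∑ i, (lam i - t) * (c i - ind i) + t * (∑ i, c i - ∑ i, ind i) := by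
    rw [← sum_sub_distrib, ← sum_sub_distrib, mul_sum, ← sum_add_distrib]
    exact sum_congr rfl fun i _ => by ring
  have := sum_nonpos fun i (_ : i ∈ univ) => hterm i
  rw [hsum, hind_sum, sub_self, mul_zero, add_zero] at hsplit
  linarith

namespace Matrix

variable {m n p κ : Type*} [Fintype m] [Fintype n] [Fintype p]

theorem trace_transpose_mul_mul_nonneg {A : Matrix n n ℝ} (hA : A.PosSemidef)
    (B : Matrix n p ℝ) : 0 ≤ trace (Bᵀ * A * B) := by
  simpa [conjTranspose_eq_transpose_of_trivial] using
    (hA.conjTranspose_mul_mul_same B).trace_nonneg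

theorem trace_sub_mul_transpose_transpose_mul_self [DecidableEq p] (X : Matrix n m ℝ)
    (Z : Matrix n p ℝ) {W : Matrix m p ℝ} (hW : Wᵀ * W = 1) :
    trace ((X - Z * Wᵀ)ᵀ * (X - Z * Wᵀ))
      = trace (Xᵀ * X) - 2 * trace (Zᵀ * X * W) + trace (Zᵀ * Z) := by
  have hcross : trace ((Z * Wᵀ)ᵀ * X) = trace (Zᵀ * X * W) := by
    rw [transpose_mul, transpose_transpose, Matrix.mul_assoc, trace_mul_comm]
  have hcross' : trace (Xᵀ * (Z * Wᵀ)) = trace (Zᵀ * X * W) := by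
    rw [← hcross, ← trace_transpose, transpose_mul, transpose_transpose]
  have hquad : trace ((Z * Wᵀ)ᵀ * (Z * Wᵀ)) = trace (Zᵀ * Z) := by
    rw [transpose_mul, transpose_transpose, trace_mul_comm, Matrix.mul_assoc,
      ← Matrix.mul_assoc Wᵀ, hW, Matrix.one_mul, trace_mul_comm]
  simp only [transpose_sub, Matrix.sub_mul, Matrix.mul_sub, trace_sub, hcross, hcross', hquad]
  ring

theorem trace_transpose_sub_mul_mul_sub {A : Matrix n n ℝ} (hA : Aᵀ = A) (Z B : Matrix n p ℝ) :
    trace ((Z - B)ᵀ * A * (Z - B))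
      = trace (Zᵀ * A * Z) - 2 * trace (Zᵀ * A * B) + trace (Bᵀ * A * B) := by
  have hcross : trace (Bᵀ * A * Z) = trace (Zᵀ * A * B) := by
    rw [← trace_transpose, transpose_mul, transpose_mul, hA, transpose_transpose,
      Matrix.mul_assoc]
  simp only [transpose_sub, Matrix.sub_mul, Matrix.mul_sub, trace_sub, hcross]
  ring

theorem trace_sub_mul_transpose_add_trace_eq [DecidableEq n] [DecidableEq p] {M : Matrix n n ℝ}
    (hM : Mᵀ = M) (hdet : IsUnit (1 + M).det) (X : Matrix n m ℝ) (Z : Matrix n p ℝ)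
    {W : Matrix m p ℝ} (hW : Wᵀ * W = 1) :
    trace ((X - Z * Wᵀ)ᵀ * (X - Z * Wᵀ)) + trace (Zᵀ * M * Z)
      = trace (Xᵀ * X) - trace (Wᵀ * (Xᵀ * (1 + M)⁻¹ * X) * W)
        + trace ((Z - (1 + M)⁻¹ * X * W)ᵀ * (1 + M) * (Z - (1 + M)⁻¹ * X * W)) := by
  set A := 1 + M
  have hA : Aᵀ = A := by simp [A, hM]
  have hAB : A * (A⁻¹ * X * W) = X * W := by
    rw [← Matrix.mul_assoc, ← Matrix.mul_assoc, mul_nonsing_inv A hdet, Matrix.one_mul]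
  have hBA : (A⁻¹ * X * W)ᵀ * A = Wᵀ * Xᵀ := by
    rw [← hA, ← transpose_mul, hA, hAB, transpose_mul]
  rw [trace_sub_mul_transpose_transpose_mul_self X Z hW, trace_transpose_sub_mul_mul_sub hA,
    Matrix.mul_assoc Zᵀ A (A⁻¹ * X * W), hAB, hBA]
  simp only [A, Matrix.mul_add, Matrix.add_mul, Matrix.mul_one, trace_add, Matrix.mul_assoc]
  ring

theorem of_mul_transpose_of_of_orthonormal [DecidableEq κ] {v : κ → m → ℝ}
    (hv : ∀ i j, v i ⬝ᵥ v j = if i = j then 1 else 0) : of v * (of v)ᵀ = 1 := by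
  ext i j
  exact hv i j

theorem mul_transpose_of_eq_transpose_of_mul_diagonal [Fintype κ] [DecidableEq κ]
    {S : Matrix m m ℝ} {v : κ → m → ℝ} {μ : κ → ℝ} (hv : ∀ j, S *ᵥ v j = μ j • v j) :
    S * (of v)ᵀ = (of v)ᵀ * diagonal μ := by
  ext i j
  simpa [mul_apply', mulVec, mul_comm] using congrFun (hv j) i

theorem trace_transpose_mul_conj_diagonal_mul [DecidableEq m] (U : Matrix m m ℝ)
    (lam : m → ℝ) (W : Matrix m p ℝ) :
    trace (Wᵀ * (U * diagonal lam * Uᵀ) * W) = ∑ i, lam i * (Uᵀ * (W * Wᵀ) * U) i i := by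
  have : trace (Wᵀ * (U * diagonal lam * Uᵀ) * W)
      = trace (diagonal lam * (Uᵀ * (W * Wᵀ) * U)) := by
    simp only [← Matrix.mul_assoc]
    rw [trace_mul_cycle, ← Matrix.mul_assoc, trace_mul_cycle, ← Matrix.mul_assoc,
      trace_mul_cycle]
    simp only [Matrix.mul_assoc]
  rw [this, trace]
  simp [diagonal_mul]

theorem posSemidef_transpose_mul_mul_transpose_mul (U : Matrix m n ℝ) (W : Matrix m p ℝ) :
    (Uᵀ * (W * Wᵀ) * U).PosSemidef := by
  simpa [conjTranspose_eq_transpose_of_trivial, transpose_mul, Matrix.mul_assoc] using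
    posSemidef_conjTranspose_mul_self (Wᵀ * U)

theorem transpose_mul_mul_transpose_mul_apply_self_le_one [DecidableEq m] [DecidableEq p]
    {U : Matrix m m ℝ} (hU : Uᵀ * U = 1) {W : Matrix m p ℝ} (hW : Wᵀ * W = 1) (i : m) :
    (Uᵀ * (W * Wᵀ) * U) i i ≤ 1 := by
  have hidem : W * Wᵀ * (W * Wᵀ) = W * Wᵀ := by
    rw [Matrix.mul_assoc, ← Matrix.mul_assoc Wᵀ, hW, Matrix.one_mul]
  have hproj : (1 - W * Wᵀ)ᵀ * (1 - W * Wᵀ) = 1 - W * Wᵀ := by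
    simp [transpose_mul, Matrix.sub_mul, Matrix.mul_sub, hidem]
  have hP : (1 - W * Wᵀ).PosSemidef := by
    rw [← hproj, ← conjTranspose_eq_transpose_of_trivial]
    exact posSemidef_conjTranspose_mul_self _
  have := (hP.conjTranspose_mul_mul_same U).diag_nonneg (i := i)
  rw [conjTranspose_eq_transpose_of_trivial, Matrix.mul_sub, Matrix.sub_mul, Matrix.mul_one,
    hU] at this
  simpa using this

theorem sum_transpose_mul_mul_transpose_mul_apply_self [DecidableEq m] [DecidableEq p]
    {U : Matrix m m ℝ} (hU : Uᵀ * U = 1) {W : Matrix m p ℝ} (hW : Wᵀ * W = 1) :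
    ∑ i, (Uᵀ * (W * Wᵀ) * U) i i = Fintype.card p := by
  change trace _ = _
  rw [trace_mul_cycle, ← Matrix.mul_assoc, mul_eq_one_comm.mp hU, Matrix.one_mul,
    trace_mul_comm, hW, trace_one]

theorem trace_transpose_mul_conj_diagonal_mul_le [DecidableEq m] [DecidableEq p]
    {U : Matrix m m ℝ} (hU : Uᵀ * U = 1) {lam : m → ℝ} {s : Finset m}
    (hsep : ∀ i ∈ s, ∀ j ∉ s, lam j ≤ lam i) (hs : #s = Fintype.card p)
    {W : Matrix m p ℝ} (hW : Wᵀ * W = 1) :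
    trace (Wᵀ * (U * diagonal lam * Uᵀ) * W) ≤ ∑ i ∈ s, lam i := by
  rw [trace_transpose_mul_conj_diagonal_mul]
  refine sum_mul_le_sum_of_separated hsep
    (fun i => (posSemidef_transpose_mul_mul_transpose_mul U W).diag_nonneg)
    (transpose_mul_mul_transpose_mul_apply_self_le_one hU hW) ?_
  rw [sum_transpose_mul_mul_transpose_mul_apply_self hU hW, hs]

theorem trace_transpose_mul_conj_diagonal_mul_le_sum_castLE {d k : ℕ} (hk : k ≤ d)
    {U : Matrix (Fin d) (Fin d) ℝ} (hU : Uᵀ * U = 1) {lam : Fin d → ℝ} (hlam : Antitone lam)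
    {W : Matrix (Fin d) (Fin k) ℝ} (hW : Wᵀ * W = 1) :
    trace (Wᵀ * (U * diagonal lam * Uᵀ) * W) ≤ ∑ j : Fin k, lam (Fin.castLE hk j) := by
  refine (trace_transpose_mul_conj_diagonal_mul_le hU ?_ (by simp) hW).trans_eq
    (sum_map univ (Fin.castLEEmb hk) lam)
  simp only [mem_map, mem_univ, true_and, not_exists]
  rintro _ ⟨i, rfl⟩ j hj
  refine hlam (Fin.le_def.mpr ?_)
  by_contra! hjk
  exact hj ⟨j, hjk.trans i.isLt⟩ (Fin.ext rfl)

end Matrix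

/-- Supervised GPCA closed form: the minimum of
`‖X − ZWᵀ‖_F² + α·Tr(Zᵀ L_spr Z)` (squared Frobenius norm written as a trace)
over `Z` and orthonormal `W` is attained at `W*`, the top-`k` orthonormal
eigenvectors of `Xᵀ(I + αL_spr)⁻¹X`, together with
`Z* = (I + αL_spr)⁻¹ X W*`, and the minimum value equals
`Tr(XᵀX)` minus the sum of the `k` largest eigenvalues. -/
theorem stmt15 {n d k : ℕ} (hk : k ≤ d) (X : Matrix (Fin n) (Fin d) ℝ)
    (Lspr : Matrix (Fin n) (Fin n) ℝ) (hL : Lspr.PosSemidef)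
    (α : ℝ) (hα : 0 < α)
    (S : Matrix (Fin d) (Fin d) ℝ) (hS : S = Xᵀ * (1 + α • Lspr)⁻¹ * X)
    (w : Fin d → (Fin d → ℝ)) (lam : Fin d → ℝ)
    (horth : ∀ i j, w i ⬝ᵥ w j = if i = j then (1 : ℝ) else 0)
    (heig : ∀ i, S.mulVec (w i) = lam i • w i)
    (hsorted : Antitone lam)
    (f : Matrix (Fin n) (Fin k) ℝ → Matrix (Fin d) (Fin k) ℝ → ℝ)
    (hf : ∀ Z W, f Z W = Matrix.trace ((X - Z * Wᵀ)ᵀ * (X - Z * Wᵀ))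
        + α * Matrix.trace (Zᵀ * Lspr * Z))
    (Wstar : Matrix (Fin d) (Fin k) ℝ)
    (hWstar : Wstar = Matrix.of fun i (j : Fin k) => w (Fin.castLE hk j) i)
    (Zstar : Matrix (Fin n) (Fin k) ℝ)
    (hZstar : Zstar = (1 + α • Lspr)⁻¹ * X * Wstar) :
    Wstarᵀ * Wstar = 1 ∧
      (∀ (Z : Matrix (Fin n) (Fin k) ℝ) (W : Matrix (Fin d) (Fin k) ℝ),
        Wᵀ * W = 1 → f Zstar Wstar ≤ f Z W) ∧
      f Zstar Wstar
        = Matrix.trace (Xᵀ * X) - ∑ j : Fin k, lam (Fin.castLE hk j) := by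
  have hA : (1 + α • Lspr).PosDef := PosDef.one.add_posSemidef (hL.smul hα.le)
  have hsymm : (α • Lspr)ᵀ = α • Lspr := by
    rw [transpose_smul, ← conjTranspose_eq_transpose_of_trivial, hL.1]
  have hobj : ∀ Z W, Wᵀ * W = 1 → f Z W = trace (Xᵀ * X) - trace (Wᵀ * S * W)
      + trace ((Z - (1 + α • Lspr)⁻¹ * X * W)ᵀ * (1 + α • Lspr)
        * (Z - (1 + α • Lspr)⁻¹ * X * W)) := fun Z W hW => by
    rw [hf, hS, ← trace_sub_mul_transpose_add_trace_eq hsymm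
      ((isUnit_iff_isUnit_det _).mp hA.isUnit) X Z hW]
    simp [Matrix.mul_smul, trace_smul]
  have hU : (of w)ᵀᵀ * (of w)ᵀ = 1 := of_mul_transpose_of_of_orthonormal horth
  have hspec : S = (of w)ᵀ * diagonal lam * (of w)ᵀᵀ := by
    rw [← mul_transpose_of_eq_transpose_of_mul_diagonal heig, Matrix.mul_assoc,
      mul_eq_one_comm.mp hU, Matrix.mul_one]
  have hWstar' : Wstar = (of fun j => w (Fin.castLE hk j))ᵀ := hWstar
  have hWorth : Wstarᵀ * Wstar = 1 := by
    rw [hWstar', transpose_transpose]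
    exact of_mul_transpose_of_of_orthonormal fun i j => by simp [horth, Fin.castLE_inj]
  have htop : trace (Wstarᵀ * S * Wstar) = ∑ j : Fin k, lam (Fin.castLE hk j) := by
    rw [Matrix.mul_assoc, hWstar', mul_transpose_of_eq_transpose_of_mul_diagonal
      fun j => heig _, ← Matrix.mul_assoc, ← hWstar', hWorth, Matrix.one_mul, trace_diagonal]
  have hval : f Zstar Wstar = trace (Xᵀ * X) - ∑ j : Fin k, lam (Fin.castLE hk j) := by
    rw [hobj _ _ hWorth, htop, hZstar, sub_self]
    simp
  refine ⟨hWorth, fun Z W hW => ?_, hval⟩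
  have hKyFan := trace_transpose_mul_conj_diagonal_mul_le_sum_castLE hk hU hsorted hW
  have hresidual := trace_transpose_mul_mul_nonneg hA.posSemidef (Z - (1 + α • Lspr)⁻¹ * X * W)
  rw [← hspec] at hKyFan
  rw [hval, hobj Z W hW]
  linarith
end
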